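/- Let R > r > 0. The Villarceau circle γ(t) = (√(R² − r²)·cos t, r + R·sin t, r·cos t) on the torus with radii R, r makes constant angles with the latitude circles and with the meridian circles, with cosines √(R² − r²)/R and r/R respectively (in absolute value). These two angles are equal if and only if R² = 2r², i.e. R = √2·r, and in that case both angles equal 45 degrees (both cosines equal √2/2). -/

import Mathlib

open Real

/-- The point `(x, y, z)` of Euclidean 3-space. -/
noncomputable def pt (x y z : ℝ) : EuclideanSpace ℝ (Fin 3) :=
  (WithLp.equiv 2 (Fin 3 → ℝ)).symm ![x, y, z]

/-- The torus of revolution with major radius `R` and minor radius `r`: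
`T = {(x, y, z) : (√(x² + y²) − R)² + z² = r²}`. -/
def torus (R r : ℝ) : Set (EuclideanSpace ℝ (Fin 3)) :=
  {p | (Real.sqrt ((p 0) ^ 2 + (p 1) ^ 2) - R) ^ 2 + (p 2) ^ 2 = r ^ 2}

/-- The bitangent plane `P = {(x, y, z) : √(R² − r²)·z = r·x}`. -/
def bitangentPlane (R r : ℝ) : Set (EuclideanSpace ℝ (Fin 3)) :=
  {p | Real.sqrt (R ^ 2 - r ^ 2) * p 2 = r * p 0}

/-- The Villarceau circle `γ(t) = (√(R² − r²)·cos t, r + R·sin t, r·cos t)`. -/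
noncomputable def villarceau (R r : ℝ) (t : ℝ) : EuclideanSpace ℝ (Fin 3) :=
  pt (Real.sqrt (R ^ 2 - r ^ 2) * Real.cos t) (r + R * Real.sin t) (r * Real.cos t)

open RealInnerProductSpace

/-- The tangent direction `(−y, x, 0)` of the latitude circle through `(x, y, z)`. -/
noncomputable def latitudeTangent (p : EuclideanSpace ℝ (Fin 3)) : EuclideanSpace ℝ (Fin 3) :=
  pt (-(p 1)) (p 0) 0

/-- The unit tangent vector to the meridian circle of the torus through `γ(t)`. -/
noncomputable def meridianTangent (R r : ℝ) (t : ℝ) : EuclideanSpace ℝ (Fin 3) :=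
  pt (-Real.cos t * (Real.sqrt (R ^ 2 - r ^ 2) * Real.cos t / (R + r * Real.sin t)))
     (-Real.cos t * ((r + R * Real.sin t) / (R + r * Real.sin t)))
     (Real.sin t)

/-!
The Villarceau circle has constant speed `R`, and `γ(t)` lies at distance `R + r sin t` from the
`z`-axis, because `(√(R² − r²) cos t)² + (r + R sin t)² = (R + r sin t)²`. That distance is the
length of the latitude tangent `(−y, x, 0)` and also the denominator of the unit meridian tangent.
Against these, `γ'(t)` has inner products `√(R² − r²) (R + r sin t)` and `−r`, so the two cosines
are the constants `√(R² − r²)/R` and `−r/R`. They agree exactly when `√(R² − r²) = r`, that is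
`R² = 2r²`, and then both equal `1/√2 = cos (π/4)`.
-/

lemma norm_pt (x y z : ℝ) : ‖pt x y z‖ = √(x ^ 2 + y ^ 2 + z ^ 2) := by
  simp [pt, EuclideanSpace.norm_eq, Fin.sum_univ_three]

lemma inner_pt (x y z a b c : ℝ) : ⟪pt x y z, pt a b c⟫ = x * a + y * b + z * c := by
  simp only [pt, WithLp.equiv_symm_apply, PiLp.inner_apply, RCLike.inner_apply, ringHom_apply,
    Fin.sum_univ_three, Fin.isValue, Matrix.cons_val_zero, Matrix.cons_val_one, Matrix.cons_val]
  ring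

lemma latitudeTangent_pt (x y z : ℝ) : latitudeTangent (pt x y z) = pt (-y) x 0 := rfl

section Villarceau

variable {R r : ℝ}

lemma hasDerivAt_villarceau (t : ℝ) :
    HasDerivAt (villarceau R r) (pt (-√(R ^ 2 - r ^ 2) * sin t) (R * cos t) (-r * sin t)) t := by
  have hcoord : HasDerivAt (fun t => (WithLp.equiv 2 (Fin 3 → ℝ)) (villarceau R r t))
      (WithLp.equiv 2 (Fin 3 → ℝ) (pt (-√(R ^ 2 - r ^ 2) * sin t) (R * cos t) (-r * sin t))) t := by
    rw [hasDerivAt_pi]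
    intro i
    fin_cases i
    · simpa [villarceau, pt] using (hasDerivAt_cos t).const_mul (√(R ^ 2 - r ^ 2))
    · simpa [villarceau, pt] using ((hasDerivAt_sin t).const_mul R).const_add r
    · simpa [villarceau, pt] using (hasDerivAt_cos t).const_mul r
  exact (PiLp.continuousLinearEquiv 2 ℝ (fun _ : Fin 3 => ℝ)).symm.hasFDerivAt.comp_hasDerivAt t
    hcoord

lemma deriv_villarceau (t : ℝ) :
    deriv (villarceau R r) t = pt (-√(R ^ 2 - r ^ 2) * sin t) (R * cos t) (-r * sin t) :=
  (hasDerivAt_villarceau t).deriv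

lemma sq_sqrt_sq_sub_sq (hrR : |r| ≤ R) : √(R ^ 2 - r ^ 2) ^ 2 = R ^ 2 - r ^ 2 :=
  sq_sqrt (by nlinarith [abs_nonneg r, sq_abs r])

lemma add_mul_sin_pos (hrR : |r| < R) (t : ℝ) : 0 < R + r * sin t := by
  have : |r * sin t| ≤ |r| := by
    rw [abs_mul]
    exact mul_le_of_le_one_right (abs_nonneg r) (abs_sin_le_one t)
  linarith [neg_abs_le (r * sin t)]

lemma norm_deriv_villarceau (hrR : |r| ≤ R) (t : ℝ) : ‖deriv (villarceau R r) t‖ = R := by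
  have hnorm_sq : (-√(R ^ 2 - r ^ 2) * sin t) ^ 2 + (R * cos t) ^ 2 + (-r * sin t) ^ 2 = R ^ 2 := by
    linear_combination (sin t ^ 2) * sq_sqrt_sq_sub_sq hrR + R ^ 2 * cos_sq_add_sin_sq t
  rw [deriv_villarceau, norm_pt, hnorm_sq, sqrt_sq ((abs_nonneg r).trans hrR)]

lemma villarceau_horizontal_sq (hrR : |r| ≤ R) (t : ℝ) :
    (√(R ^ 2 - r ^ 2) * cos t) ^ 2 + (r + R * sin t) ^ 2 = (R + r * sin t) ^ 2 := by
  linear_combination (cos t ^ 2) * sq_sqrt_sq_sub_sq hrR + (R ^ 2 - r ^ 2) * sin_sq_add_cos_sq t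

lemma norm_latitudeTangent_villarceau (hrR : |r| < R) (t : ℝ) :
    ‖latitudeTangent (villarceau R r t)‖ = R + r * sin t := by
  rw [villarceau, latitudeTangent_pt, norm_pt, neg_sq, zero_pow two_ne_zero, add_zero, add_comm,
    villarceau_horizontal_sq hrR.le, sqrt_sq (add_mul_sin_pos hrR t).le]

lemma inner_deriv_villarceau_latitudeTangent (t : ℝ) :
    ⟪deriv (villarceau R r) t, latitudeTangent (villarceau R r t)⟫ =
      √(R ^ 2 - r ^ 2) * (R + r * sin t) := by
  rw [deriv_villarceau, villarceau, latitudeTangent_pt, inner_pt]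
  linear_combination (√(R ^ 2 - r ^ 2) * R) * sin_sq_add_cos_sq t

lemma norm_meridianTangent (hrR : |r| ≤ R) {t : ℝ} (hD : R + r * sin t ≠ 0) :
    ‖meridianTangent R r t‖ = 1 := by
  have hnorm_sq : (-cos t * (√(R ^ 2 - r ^ 2) * cos t / (R + r * sin t))) ^ 2 +
      (-cos t * ((r + R * sin t) / (R + r * sin t))) ^ 2 + sin t ^ 2 = 1 := by
    field_simp
    linear_combination (cos t ^ 2) * villarceau_horizontal_sq hrR t +
      (R + r * sin t) ^ 2 * sin_sq_add_cos_sq t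
  rw [meridianTangent, norm_pt, hnorm_sq, sqrt_one]

lemma inner_deriv_villarceau_meridianTangent (hrR : |r| ≤ R) {t : ℝ} (hD : R + r * sin t ≠ 0) :
    ⟪deriv (villarceau R r) t, meridianTangent R r t⟫ = -r := by
  rw [deriv_villarceau, meridianTangent, inner_pt]
  field_simp
  linear_combination (sin t * cos t ^ 2) * sq_sqrt_sq_sub_sq hrR -
    r * (R + r * sin t) * sin_sq_add_cos_sq t

theorem villarceau_cos_angle_latitude (hrR : |r| < R) (t : ℝ) :
    ⟪deriv (villarceau R r) t, latitudeTangent (villarceau R r t)⟫ /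
        (‖deriv (villarceau R r) t‖ * ‖latitudeTangent (villarceau R r t)‖) =
      √(R ^ 2 - r ^ 2) / R := by
  rw [inner_deriv_villarceau_latitudeTangent, norm_deriv_villarceau hrR.le,
    norm_latitudeTangent_villarceau hrR, mul_div_mul_right _ _ (add_mul_sin_pos hrR t).ne']

theorem villarceau_abs_cos_angle_meridian (hrR : |r| < R) (t : ℝ) :
    |⟪deriv (villarceau R r) t, meridianTangent R r t⟫ /
        (‖deriv (villarceau R r) t‖ * ‖meridianTangent R r t‖)| = |r| / R := by
  have hD := (add_mul_sin_pos hrR t).ne'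
  rw [inner_deriv_villarceau_meridianTangent hrR.le hD, norm_deriv_villarceau hrR.le,
    norm_meridianTangent hrR.le hD, mul_one, abs_div, abs_neg,
    abs_of_pos ((abs_nonneg r).trans_lt hrR)]

end Villarceau

lemma sqrt_sq_sub_sq_eq_self_iff {R r : ℝ} (hr : 0 ≤ r) (hrR : r ≤ R) :
    √(R ^ 2 - r ^ 2) = r ↔ R ^ 2 = 2 * r ^ 2 := by
  rw [sqrt_eq_iff_eq_sq (by nlinarith) hr]
  constructor <;> intro h <;> linarith

lemma sq_eq_two_mul_sq_iff {R r : ℝ} (hr : 0 ≤ r) (hR : 0 ≤ R) :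
    R ^ 2 = 2 * r ^ 2 ↔ R = √2 * r := by
  rw [← sq_eq_sq₀ hR (by positivity), mul_pow, sq_sqrt zero_le_two]

lemma div_sqrt_two_mul_self {r : ℝ} (hr : r ≠ 0) : r / (√2 * r) = √2 / 2 := by
  rw [div_mul_cancel_right₀ hr, sqrt_div_self]

lemma arccos_sqrt_two_div_two : arccos (√2 / 2) = π / 4 := by
  rw [← cos_pi_div_four, arccos_cos (by positivity) (by linarith [pi_pos])]

/-- For `R > r > 0`, the Villarceau circle makes constant angles with the latitude circles and
with the meridian circles, with cosines `√(R² − r²)/R` and `r/R` respectively (in absolute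
value).  These two angles are equal if and only if `R² = 2r²`, i.e. `R = √2·r`, and in that
case both angles equal `45` degrees (both cosines equal `√2/2`). -/
theorem villarceau_goldilocks (R r : ℝ) (hr : 0 < r) (hR : r < R) :
    (∀ t : ℝ,
      ⟪deriv (villarceau R r) t, latitudeTangent (villarceau R r t)⟫ /
          (‖deriv (villarceau R r) t‖ * ‖latitudeTangent (villarceau R r t)‖) =
        Real.sqrt (R ^ 2 - r ^ 2) / R) ∧
    (∀ t : ℝ,
      |⟪deriv (villarceau R r) t, meridianTangent R r t⟫ /
          (‖deriv (villarceau R r) t‖ * ‖meridianTangent R r t‖)| = r / R) ∧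
    (Real.sqrt (R ^ 2 - r ^ 2) / R = r / R ↔ R ^ 2 = 2 * r ^ 2) ∧
    (R ^ 2 = 2 * r ^ 2 ↔ R = Real.sqrt 2 * r) ∧
    (R = Real.sqrt 2 * r →
      Real.sqrt (R ^ 2 - r ^ 2) / R = Real.sqrt 2 / 2 ∧
      r / R = Real.sqrt 2 / 2 ∧
      Real.arccos (Real.sqrt (R ^ 2 - r ^ 2) / R) = Real.pi / 4 ∧
      Real.arccos (r / R) = Real.pi / 4) := by
  have hR0 : 0 < R := hr.trans hR
  have hrR : |r| < R := by rwa [abs_of_pos hr]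
  have hsqrt_iff := sqrt_sq_sub_sq_eq_self_iff hr.le hR.le
  have hsq_iff := sq_eq_two_mul_sq_iff hr.le hR0.le
  refine ⟨villarceau_cos_angle_latitude hrR, fun t => ?_, ?_, hsq_iff, fun hR_eq => ?_⟩
  · rw [villarceau_abs_cos_angle_meridian hrR, abs_of_pos hr]
  · rw [div_left_inj' hR0.ne', hsqrt_iff]
  · have hcos : r / R = √2 / 2 := by rw [hR_eq, div_sqrt_two_mul_self hr.ne']
    rw [hsqrt_iff.2 (hsq_iff.2 hR_eq), hcos, arccos_sqrt_two_div_two]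
    exact ⟨rfl, rfl, rfl, rfl⟩
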